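/- There exists an absolute constant c > 0 such that for every prime q and every nonempty subset A of F = ℤ/qℤ with |A| < |F|^{1/2}, one has |I(A)| ≥ c·|A|^{5/4}. -/

import Mathlib

open scoped Pointwise

/-- `I(A) = {a₁(a₂-a₃) + a₄(a₅-a₆) : a₁,…,a₆ ∈ A}`. -/
def Iset {q : ℕ} (A : Finset (ZMod q)) : Finset (ZMod q) :=
  (A ×ˢ A ×ˢ A ×ˢ A ×ˢ A ×ˢ A).image fun p =>
    p.1 * (p.2.1 - p.2.2.1) + p.2.2.2.1 * (p.2.2.2.2.1 - p.2.2.2.2.2)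

open Finset

namespace KonyaginAux

variable {q : ℕ}

lemma mem_Iset {A : Finset (ZMod q)} {x a b y c d : ZMod q}
    (hx : x ∈ A) (ha : a ∈ A) (hb : b ∈ A) (hy : y ∈ A) (hc : c ∈ A) (hd : d ∈ A) :
    x * (a - b) + y * (c - d) ∈ Iset A := by
  refine mem_image.2 ⟨(x, a, b, y, c, d), ?_, rfl⟩
  simp [Finset.mem_product, hx, ha, hb, hy, hc, hd]

lemma smul_addset (d : ZMod q) (S T : Finset (ZMod q)) :
    d • (S + T) = d • S + d • T := by
  ext x
  simp only [Finset.mem_smul_finset, Finset.mem_add, smul_eq_mul]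
  constructor
  · rintro ⟨y, ⟨u, hu, v, hv, rfl⟩, rfl⟩
    exact ⟨d * u, ⟨u, hu, rfl⟩, d * v, ⟨v, hv, rfl⟩, (mul_add d u v).symm⟩
  · rintro ⟨y, ⟨u, hu, rfl⟩, z, ⟨v, hv, rfl⟩, rfl⟩
    exact ⟨u + v, ⟨u, hu, v, hv, rfl⟩, mul_add d u v⟩

variable [Fact q.Prime]

lemma card_smul' {d : ZMod q} (hd : d ≠ 0) (S : Finset (ZMod q)) :
    (d • S).card = S.card := by
  have hinj : Function.Injective (fun x : ZMod q => d • x) := by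
    intro x y h
    simp only [smul_eq_mul] at h
    exact mul_left_cancel₀ hd h
  rw [Finset.smul_finset_def, Finset.card_image_of_injective _ hinj]

lemma addset_subset {A : Finset (ZMod q)} {d₁ d₂ : ZMod q}
    (h₁ : d₁ ∈ A - A) (h₂ : d₂ ∈ A - A) :
    d₁ • A + d₂ • A ⊆ Iset A := by
  obtain ⟨a, ha, b, hb, rfl⟩ := mem_sub.1 h₁
  obtain ⟨c, hc, e, he, rfl⟩ := mem_sub.1 h₂
  intro z hz
  obtain ⟨u, hu, v, hv, rfl⟩ := mem_add.1 hz
  obtain ⟨x, hx, rfl⟩ := mem_smul_finset.1 hu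
  obtain ⟨y, hy, rfl⟩ := mem_smul_finset.1 hv
  have hrw : (a - b) • x + (c - e) • y = x * (a - b) + y * (c - e) := by
    simp only [smul_eq_mul]; ring
  rw [hrw]
  exact mem_Iset hx ha hb hy hc he

/-- The energy bound: `n⁴ ≤ |A + ξA| · E(ξ)`. -/
lemma card_energy (A : Finset (ZMod q)) (ξ : ZMod q) :
    (A.card ^ 2) ^ 2 ≤ (A + ξ • A).card *
      (((A ×ˢ A) ×ˢ (A ×ˢ A)).filter fun z =>
        z.1.1 + ξ * z.1.2 = z.2.1 + ξ * z.2.2).card := by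
  classical
  set P : Finset (ZMod q × ZMod q) := A ×ˢ A with hP
  set S : Finset (ZMod q) := A + ξ • A with hS
  set r : ZMod q → ℕ := fun s => (P.filter fun p => p.1 + ξ * p.2 = s).card with hr
  have hmap : ∀ p ∈ P, p.1 + ξ * p.2 ∈ S := by
    intro p hp
    rw [hP, mem_product] at hp
    exact mem_add.2 ⟨p.1, hp.1, ξ * p.2, mem_smul_finset.2 ⟨p.2, hp.2, rfl⟩, rfl⟩
  have h1 : P.card = ∑ s ∈ S, r s :=
    card_eq_sum_card_fiberwise hmap
  have h2 : (((A ×ˢ A) ×ˢ (A ×ˢ A)).filter fun z =>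
      z.1.1 + ξ * z.1.2 = z.2.1 + ξ * z.2.2).card = ∑ s ∈ S, (r s) ^ 2 := by
    rw [card_eq_sum_card_fiberwise (f := fun z => z.1.1 + ξ * z.1.2) (t := S)
      (fun z hz => hmap z.1 (mem_product.1 (mem_filter.1 hz).1).1)]
    refine Finset.sum_congr rfl fun s _ => ?_
    have hfib : (((A ×ˢ A) ×ˢ (A ×ˢ A)).filter fun z =>
        z.1.1 + ξ * z.1.2 = z.2.1 + ξ * z.2.2).filter
          (fun z => z.1.1 + ξ * z.1.2 = s) =
        (P.filter fun p => p.1 + ξ * p.2 = s) ×ˢ (P.filter fun p => p.1 + ξ * p.2 = s) := by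
      ext z
      simp only [mem_filter, mem_product, hP]
      constructor
      · rintro ⟨⟨⟨hz1, hz2⟩, heq⟩, hs⟩
        exact ⟨⟨hz1, hs⟩, hz2, heq ▸ hs⟩
      · rintro ⟨⟨hz1, hs1⟩, hz2, hs2⟩
        exact ⟨⟨⟨hz1, hz2⟩, hs1.trans hs2.symm⟩, hs1⟩
    rw [hfib, card_product, sq]
  rw [h2]
  have hCS : (∑ s ∈ S, r s) ^ 2 ≤ S.card * ∑ s ∈ S, (r s) ^ 2 :=
    sq_sum_le_card_mul_sum_sq
  have hPcard : P.card = A.card ^ 2 := by rw [hP, card_product, sq]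
  calc (A.card ^ 2) ^ 2 = (∑ s ∈ S, r s) ^ 2 := by rw [← h1, hPcard]
    _ ≤ S.card * ∑ s ∈ S, (r s) ^ 2 := hCS

/-- The diagonal bound: `E(ξ) ≤ n² + T(ξ)`. -/
lemma energy_le (A : Finset (ZMod q)) (ξ : ZMod q) :
    (((A ×ˢ A) ×ˢ (A ×ˢ A)).filter fun z =>
        z.1.1 + ξ * z.1.2 = z.2.1 + ξ * z.2.2).card ≤
      A.card ^ 2 + (((A ×ˢ A) ×ˢ (A ×ˢ A)).filter fun z =>
        (z.1.1 + ξ * z.1.2 = z.2.1 + ξ * z.2.2) ∧ z.1.2 ≠ z.2.2).card := by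
  classical
  set E := ((A ×ˢ A) ×ˢ (A ×ˢ A)).filter fun z =>
    z.1.1 + ξ * z.1.2 = z.2.1 + ξ * z.2.2 with hE
  have hsplit := Finset.card_filter_add_card_filter_not
    (s := E) (p := fun z => z.1.2 = z.2.2)
  have hdiag : (E.filter fun z => z.1.2 = z.2.2).card ≤ A.card ^ 2 := by
    have hsub : ∀ z ∈ E.filter fun z => z.1.2 = z.2.2, z.2 = z.1 := by
      intro z hz
      rw [mem_filter, hE, mem_filter] at hz
      obtain ⟨⟨_, heq⟩, hb⟩ := hz
      have h1 : z.2.1 = z.1.1 := by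
        rw [hb] at heq
        exact (add_right_cancel heq).symm
      exact Prod.ext h1 hb.symm
    have : (E.filter fun z => z.1.2 = z.2.2).card ≤ (A ×ˢ A).card := by
      apply card_le_card_of_injOn (fun z => z.1)
      · intro z hz
        have := (mem_filter.1 hz).1
        rw [hE, mem_filter] at this
        exact (mem_product.1 this.1).1
      · intro z hz z' hz' h
        have e1 := hsub z hz
        have e2 := hsub z' hz'
        have h' : z.1 = z'.1 := h
        exact Prod.ext h' (by rw [e1, e2, h'])
    simpa [card_product, sq] using this
  have hT : E.filter (fun z => ¬ z.1.2 = z.2.2) =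
      ((A ×ˢ A) ×ˢ (A ×ˢ A)).filter fun z =>
        (z.1.1 + ξ * z.1.2 = z.2.1 + ξ * z.2.2) ∧ z.1.2 ≠ z.2.2 := by
    rw [hE, filter_filter]
  calc E.card = (E.filter fun z => z.1.2 = z.2.2).card
        + (E.filter fun z => ¬ z.1.2 = z.2.2).card := hsplit.symm
    _ ≤ A.card ^ 2 + (((A ×ˢ A) ×ˢ (A ×ˢ A)).filter fun z =>
        (z.1.1 + ξ * z.1.2 = z.2.1 + ξ * z.2.2) ∧ z.1.2 ≠ z.2.2).card := by
      rw [← hT]; exact Nat.add_le_add_right hdiag _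

/-- Nontrivial energy quadruples for distinct `ξ` are disjoint. -/
lemma T_disjoint (A : Finset (ZMod q)) {ξ ξ' : ZMod q} (hne : ξ ≠ ξ') :
    Disjoint
      (((A ×ˢ A) ×ˢ (A ×ˢ A)).filter fun z =>
        (z.1.1 + ξ * z.1.2 = z.2.1 + ξ * z.2.2) ∧ z.1.2 ≠ z.2.2)
      (((A ×ˢ A) ×ˢ (A ×ˢ A)).filter fun z =>
        (z.1.1 + ξ' * z.1.2 = z.2.1 + ξ' * z.2.2) ∧ z.1.2 ≠ z.2.2) := by
  rw [Finset.disjoint_left]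
  rintro z hz hz'
  rw [mem_filter] at hz hz'
  obtain ⟨-, heq, hb⟩ := hz
  obtain ⟨-, heq', -⟩ := hz'
  have hzero : (ξ - ξ') * (z.1.2 - z.2.2) = 0 := by linear_combination heq - heq'
  rcases mul_eq_zero.1 hzero with h | h
  · exact hne (sub_eq_zero.1 h)
  · exact hb (sub_eq_zero.1 h)

/-- Case 1: if every element of the field is a ratio of differences (or 0), then some ratio
`ξ` has `|A + ξA| ≥ n²/4`. -/
lemma exists_good (A : Finset (ZMod q)) (hA2 : 2 ≤ A.card) (hq : A.card ^ 2 < q)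
    (R : Finset (ZMod q)) (hR : ∀ x : ZMod q, x ∈ R ∨ x = 0) :
    ∃ ξ ∈ R, ((A.card : ℝ) ^ 2) / 4 ≤ ((A + ξ • A).card : ℝ) := by
  classical
  by_contra hcon
  push_neg at hcon
  set n := A.card with hn
  set T : ZMod q → Finset ((ZMod q × ZMod q) × (ZMod q × ZMod q)) := fun ξ =>
    ((A ×ˢ A) ×ˢ (A ×ˢ A)).filter fun z =>
      (z.1.1 + ξ * z.1.2 = z.2.1 + ξ * z.2.2) ∧ z.1.2 ≠ z.2.2 with hT
  have hnpos : (0:ℝ) < (n:ℝ) := by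
    have : 0 < n := lt_of_lt_of_le (by norm_num) hA2
    exact_mod_cast this
  -- each ξ ∈ R has many nontrivial quadruples
  have hkey : ∀ ξ ∈ R, 3 * (n:ℝ) ^ 2 ≤ ((T ξ).card : ℝ) := by
    intro ξ hξ
    have h1 : (n ^ 2) ^ 2 ≤ (A + ξ • A).card *
        (((A ×ˢ A) ×ˢ (A ×ˢ A)).filter fun z =>
          z.1.1 + ξ * z.1.2 = z.2.1 + ξ * z.2.2).card := card_energy A ξ
    have h2 := energy_le A ξ
    have hlt := hcon ξ hξ
    set E := (((A ×ˢ A) ×ˢ (A ×ˢ A)).filter fun z =>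
      z.1.1 + ξ * z.1.2 = z.2.1 + ξ * z.2.2).card with hE
    have h1' : ((n:ℝ) ^ 2) ^ 2 ≤ ((A + ξ • A).card : ℝ) * (E : ℝ) := by exact_mod_cast h1
    have h2' : (E : ℝ) ≤ (n:ℝ) ^ 2 + ((T ξ).card : ℝ) := by exact_mod_cast h2
    have hEnn : (0:ℝ) ≤ (E : ℝ) := by positivity
    have hstep : ((n:ℝ) ^ 2) ^ 2 ≤ ((n:ℝ) ^ 2 / 4) * ((n:ℝ) ^ 2 + ((T ξ).card : ℝ)) := by
      calc ((n:ℝ) ^ 2) ^ 2 ≤ ((A + ξ • A).card : ℝ) * (E : ℝ) := h1'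
        _ ≤ ((n:ℝ) ^ 2 / 4) * (E : ℝ) := by
            apply mul_le_mul_of_nonneg_right (le_of_lt hlt) hEnn
        _ ≤ ((n:ℝ) ^ 2 / 4) * ((n:ℝ) ^ 2 + ((T ξ).card : ℝ)) := by
            apply mul_le_mul_of_nonneg_left h2' (by positivity)
    nlinarith [sq_nonneg (n:ℝ), hnpos]
  -- the sets T ξ are pairwise disjoint, all inside a set of size n⁴
  have hsum : ∑ ξ ∈ R, (T ξ).card ≤ n ^ 4 := by
    have hdisj : ∀ ξ ∈ R, ∀ ξ' ∈ R, ξ ≠ ξ' → Disjoint (T ξ) (T ξ') := by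
      intro ξ _ ξ' _ hne
      exact T_disjoint A hne
    calc ∑ ξ ∈ R, (T ξ).card = (R.biUnion T).card := (Finset.card_biUnion hdisj).symm
      _ ≤ ((A ×ˢ A) ×ˢ (A ×ˢ A)).card := by
          apply card_le_card
          intro z hz
          obtain ⟨ξ, -, hzT⟩ := Finset.mem_biUnion.1 hz
          exact (mem_filter.1 hzT).1
      _ = n ^ 4 := by rw [card_product, card_product, hn]; ring
  -- R is large
  have hRcard : n ^ 2 ≤ R.card := by
    have huniv : (Finset.univ : Finset (ZMod q)) ⊆ R ∪ {0} := by
      intro x _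
      rcases hR x with h | h
      · exact mem_union_left _ h
      · exact mem_union_right _ (by simp [h])
    have hq' : q ≤ R.card + 1 := by
      have h1 : (Finset.univ : Finset (ZMod q)).card = q := by
        simp [ZMod.card]
      calc q = (Finset.univ : Finset (ZMod q)).card := h1.symm
        _ ≤ (R ∪ {0}).card := card_le_card huniv
        _ ≤ R.card + ({0} : Finset (ZMod q)).card := card_union_le _ _
        _ = R.card + 1 := by simp
    omega
  -- contradiction
  have hlow : (R.card : ℝ) * (3 * (n:ℝ) ^ 2) ≤ ((n:ℝ) ^ 2) ^ 2 := by
    have h1 : ∑ ξ ∈ R, (3 * (n:ℝ) ^ 2) ≤ ∑ ξ ∈ R, ((T ξ).card : ℝ) :=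
      Finset.sum_le_sum hkey
    have h2 : (∑ ξ ∈ R, ((T ξ).card : ℝ)) ≤ ((n:ℝ) ^ 2) ^ 2 := by
      have : ((∑ ξ ∈ R, (T ξ).card : ℕ) : ℝ) ≤ ((n ^ 4 : ℕ) : ℝ) := by exact_mod_cast hsum
      push_cast at this
      calc (∑ ξ ∈ R, ((T ξ).card : ℝ)) = ((∑ ξ ∈ R, (T ξ).card : ℕ) : ℝ) := by push_cast; ring
        _ ≤ ((n ^ 4 : ℕ) : ℝ) := by exact_mod_cast hsum
        _ = ((n:ℝ) ^ 2) ^ 2 := by push_cast; ring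
    calc (R.card : ℝ) * (3 * (n:ℝ) ^ 2) = ∑ ξ ∈ R, (3 * (n:ℝ) ^ 2) := by
          rw [Finset.sum_const, nsmul_eq_mul]
      _ ≤ ((n:ℝ) ^ 2) ^ 2 := le_trans h1 h2
  have hRcard' : ((n:ℝ) ^ 2) ≤ (R.card : ℝ) := by exact_mod_cast hRcard
  have h3 : (n:ℝ) ^ 2 * (3 * (n:ℝ) ^ 2) ≤ ((n:ℝ) ^ 2) ^ 2 :=
    le_trans (mul_le_mul_of_nonneg_right hRcard' (by positivity)) hlow
  nlinarith [h3, pow_pos hnpos 2]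

/-- The pivot lemma. -/
lemma exists_pivot (S₀ : Finset (ZMod q)) (h0 : (0 : ZMod q) ∈ S₀)
    {x : ZMod q} (hx : x ∉ S₀) : ∃ ξ ∈ S₀, ξ + 1 ∉ S₀ := by
  by_contra h
  push_neg at h
  have key : ∀ m : ℕ, ((m : ZMod q)) ∈ S₀ := by
    intro m
    induction m with
    | zero => simpa using h0
    | succ k ih => push_cast; exact h _ ih
  haveI : NeZero q := ⟨(Fact.out (p := q.Prime)).ne_zero⟩
  exact hx (by simpa [ZMod.natCast_zmod_val] using key x.val)

end KonyaginAux

open KonyaginAux in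
/-- **Corollary 2 (Konyagin).** There is an absolute constant `c > 0` such that for
every prime `q` and every nonempty `A ⊆ ℤ/qℤ` with `|A| < |F|^(1/2)` one has
`|I(A)| ≥ c * |A|^(5/4)`. -/
theorem I_card_ge :
    ∃ c > (0 : ℝ), ∀ q : ℕ, q.Prime →
      ∀ A : Finset (ZMod q), A.Nonempty → (A.card : ℝ) < (q : ℝ) ^ ((1 : ℝ) / 2) →
        c * (A.card : ℝ) ^ ((5 : ℝ) / 4) ≤ ((Iset A).card : ℝ) := by
  classical
  refine ⟨1/4, by norm_num, ?_⟩
  intro q hq A hA hcard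
  haveI : Fact q.Prime := ⟨hq⟩
  set n := A.card with hn
  have hn1 : 1 ≤ n := hA.card_pos
  have hIpos : 1 ≤ (Iset A).card := by
    obtain ⟨a, ha⟩ := hA
    have : a * (a - a) + a * (a - a) ∈ Iset A := mem_Iset ha ha ha ha ha ha
    exact card_pos.2 ⟨_, this⟩
  have hIpos' : (1:ℝ) ≤ ((Iset A).card : ℝ) := by exact_mod_cast hIpos
  rcases eq_or_lt_of_le hn1 with h1 | h2
  · -- |A| = 1
    rw [← h1]
    push_cast
    rw [Real.one_rpow]
    linarith
  · -- |A| ≥ 2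
    have hA2 : 2 ≤ n := h2
    have hnR : (1:ℝ) ≤ (n:ℝ) := by exact_mod_cast hn1
    -- n² < q
    have hq2 : n ^ 2 < q := by
      have hqnn : (0:ℝ) ≤ (q:ℝ) := by positivity
      have h0 : ((n:ℝ)) ^ 2 < ((q:ℝ) ^ ((1:ℝ)/2)) ^ 2 :=
        pow_lt_pow_left₀ hcard (by positivity) (by norm_num)
      have h1' : ((q:ℝ) ^ ((1:ℝ)/2)) ^ 2 = (q:ℝ) := by
        rw [← Real.rpow_natCast ((q:ℝ) ^ ((1:ℝ)/2)) 2, ← Real.rpow_mul hqnn]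
        norm_num
      rw [h1'] at h0
      exact_mod_cast h0
    -- the ratio set
    set D : Finset (ZMod q) := (A - A).erase 0 with hD
    set R : Finset (ZMod q) := (D ×ˢ D).image (fun p => p.1 / p.2) with hR
    obtain ⟨a₀, ha₀, b₀, hb₀, hab₀⟩ := Finset.one_lt_card.1 h2
    have hd₀ : a₀ - b₀ ∈ D := by
      rw [hD, mem_erase]
      exact ⟨sub_ne_zero.2 hab₀, mem_sub.2 ⟨a₀, ha₀, b₀, hb₀, rfl⟩⟩
    have hDsub : D ⊆ A - A := erase_subset _ _
    have hDne : ∀ d ∈ D, d ≠ 0 := fun d hd => (mem_erase.1 hd).1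
    have hone : (1 : ZMod q) ∈ R := by
      rw [hR]
      exact mem_image.2 ⟨(a₀ - b₀, a₀ - b₀), mem_product.2 ⟨hd₀, hd₀⟩,
        div_self (hDne _ hd₀)⟩
    -- embedding of A + ξ•A into Iset A for ξ ∈ R
    have hembed : ∀ ξ ∈ R, (A + ξ • A).card ≤ (Iset A).card := by
      intro ξ hξ
      obtain ⟨⟨d₁, d₂⟩, hmem, rfl⟩ := mem_image.1 hξ
      rw [mem_product] at hmem
      have hd₂ : d₂ ≠ 0 := hDne _ hmem.2
      have e1 : d₂ • (A + (d₁ / d₂) • A) = d₂ • A + d₁ • A := by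
        rw [smul_addset]
        congr 1
        rw [smul_smul, mul_div_cancel₀ _ hd₂]
      calc (A + (d₁ / d₂) • A).card = (d₂ • (A + (d₁ / d₂) • A)).card :=
            (card_smul' hd₂ _).symm
        _ = (d₂ • A + d₁ • A).card := by rw [e1]
        _ ≤ (Iset A).card := card_le_card
            (addset_subset (hDsub hmem.2) (hDsub hmem.1))
    -- n^{5/4} ≤ n²
    have hrpow2 : ((n:ℝ)) ^ ((5:ℝ)/4) ≤ ((n:ℝ)) ^ 2 := by
      have : ((n:ℝ)) ^ ((5:ℝ)/4) ≤ ((n:ℝ)) ^ ((2:ℝ)) :=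
        Real.rpow_le_rpow_of_exponent_le hnR (by norm_num)
      calc ((n:ℝ)) ^ ((5:ℝ)/4) ≤ ((n:ℝ)) ^ ((2:ℝ)) := this
        _ = ((n:ℝ)) ^ 2 := by
            rw [show ((2:ℝ)) = ((2:ℕ):ℝ) by norm_num, Real.rpow_natCast]
    by_cases hcase : ∀ x : ZMod q, x ∈ R ∨ x = 0
    · -- Case 1
      obtain ⟨ξ, hξR, hbig⟩ := exists_good A hA2 hq2 R hcase
      have := hembed ξ hξR
      have hc : ((A + ξ • A).card : ℝ) ≤ ((Iset A).card : ℝ) := by exact_mod_cast this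
      calc (1/4 : ℝ) * (n:ℝ) ^ ((5:ℝ)/4) ≤ (1/4) * (n:ℝ) ^ 2 := by linarith
        _ = (n:ℝ) ^ 2 / 4 := by ring
        _ ≤ ((A + ξ • A).card : ℝ) := hbig
        _ ≤ ((Iset A).card : ℝ) := hc
    · -- Case 2
      push_neg at hcase
      obtain ⟨x, hxR, hx0⟩ := hcase
      have hxS : x ∉ R ∪ {0} := by
        rw [mem_union, mem_singleton]
        rintro (h | h)
        · exact hxR h
        · exact hx0 h
      obtain ⟨ξ₀, hξ₀S, hnot⟩ := exists_pivot (R ∪ {0})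
        (mem_union_right _ (mem_singleton_self 0)) hxS
      have hξ₀R : ξ₀ ∈ R := by
        rcases mem_union.1 hξ₀S with h | h
        · exact h
        · exfalso
          rw [mem_singleton] at h
          apply hnot
          rw [h, zero_add]
          exact mem_union_left _ hone
      -- injectivity of (a,b) ↦ a + (1+ξ₀)b on A × A
      have hinj : Set.InjOn (fun p : ZMod q × ZMod q => p.1 + (1 + ξ₀) * p.2)
          ↑(A ×ˢ A) := by
        intro p hp p' hp' heq
        rw [Finset.mem_coe, mem_product] at hp hp'
        simp only at heq
        by_cases hb : p.2 = p'.2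
        · have : p.1 = p'.1 := by
            rw [hb] at heq
            exact add_right_cancel heq
          exact Prod.ext this hb
        · exfalso
          have hd : (1 + ξ₀) * (p.2 - p'.2) = p'.1 - p.1 := by
            linear_combination heq
          have hbne : p.2 - p'.2 ≠ 0 := sub_ne_zero.2 hb
          by_cases ha : p'.1 - p.1 = 0
          · have : (1 + ξ₀) = 0 := by
              rcases mul_eq_zero.1 (hd.trans ha) with h | h
              · exact h
              · exact absurd h hbne
            apply hnot
            have hz : ξ₀ + 1 = 0 := by rw [add_comm]; exact this
            rw [hz]
            exact mem_union_right _ (mem_singleton_self 0)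
          · apply hnot
            have hmem1 : p'.1 - p.1 ∈ D := by
              rw [hD, mem_erase]
              exact ⟨ha, mem_sub.2 ⟨p'.1, hp'.1, p.1, hp.1, rfl⟩⟩
            have hmem2 : p.2 - p'.2 ∈ D := by
              rw [hD, mem_erase]
              exact ⟨hbne, mem_sub.2 ⟨p.2, hp.2, p'.2, hp'.2, rfl⟩⟩
            have : ξ₀ + 1 = (p'.1 - p.1) / (p.2 - p'.2) := by
              rw [eq_div_iff hbne]
              linear_combination hd
            rw [this]
            exact mem_union_left _ (mem_image.2 ⟨(p'.1 - p.1, p.2 - p'.2),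
              mem_product.2 ⟨hmem1, hmem2⟩, rfl⟩)
      -- n² ≤ |A + A + ξ₀A|
      have hcard2 : n ^ 2 ≤ (A + A + ξ₀ • A).card := by
        have himg : (A ×ˢ A).image (fun p : ZMod q × ZMod q => p.1 + (1 + ξ₀) * p.2)
            ⊆ A + A + ξ₀ • A := by
          intro z hz
          obtain ⟨p, hp, rfl⟩ := mem_image.1 hz
          rw [mem_product] at hp
          have : p.1 + (1 + ξ₀) * p.2 = (p.1 + p.2) + ξ₀ * p.2 := by ring
          rw [this]
          exact mem_add.2 ⟨p.1 + p.2, mem_add.2 ⟨p.1, hp.1, p.2, hp.2, rfl⟩,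
            ξ₀ * p.2, mem_smul_finset.2 ⟨p.2, hp.2, rfl⟩, rfl⟩
        calc n ^ 2 = (A ×ˢ A).card := by rw [card_product, sq]
          _ = ((A ×ˢ A).image (fun p : ZMod q × ZMod q => p.1 + (1 + ξ₀) * p.2)).card :=
              (Finset.card_image_of_injOn hinj).symm
          _ ≤ (A + A + ξ₀ • A).card := card_le_card himg
      -- Ruzsa triangle
      have hruzsa : (A + A + ξ₀ • A).card * A.card ≤
          (A + A - A).card * (A + ξ₀ • A).card := by
        have h := Finset.ruzsa_triangle_inequality_sub_sub_sub (A + A) A (-(ξ₀ • A))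
        have e1 : (A + A) - (-(ξ₀ • A)) = A + A + ξ₀ • A := sub_neg_eq_add _ _
        have e2 : (-(ξ₀ • A)) - A = -(ξ₀ • A + A) := by
          rw [neg_add, sub_eq_add_neg]
        have e3 : ((-(ξ₀ • A)) - A).card = (A + ξ₀ • A).card := by
          rw [e2, Finset.card_neg, add_comm]
        rw [e1, e3] at h
        exact h
      -- Pluennecke-Ruzsa
      have hplu : ((A + A - A).card : ℝ) * (n:ℝ) ^ 2 ≤ ((A + A).card : ℝ) ^ 3 := by
        have h := Finset.pluennecke_ruzsa_inequality_nsmul_sub_nsmul_add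
          (A := A) hA A 2 1
        rw [two_nsmul, one_nsmul] at h
        have h' : ((A + A - A).card : ℝ) ≤
            (((A + A).card : ℝ) / ((A.card : ℝ))) ^ (2 + 1) * (A.card : ℝ) := by
          have := h
          have hcast : (((((A + A).card : ℚ≥0) / ((A.card : ℚ≥0))) ^ (2 + 1) *
              ((A.card : ℚ≥0))) : ℝ) =
              (((A + A).card : ℝ) / ((A.card : ℝ))) ^ (2 + 1) * (A.card : ℝ) := by
            push_cast
            ring
          calc ((A + A - A).card : ℝ)
              = (((A + A - A).card : ℚ≥0) : ℝ) := by norm_cast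
            _ ≤ _ := by exact_mod_cast this
            _ = _ := hcast
        have hnpos : (0:ℝ) < (n:ℝ) := by
          have : 0 < n := hn1
          exact_mod_cast this
        rw [show (2 + 1 : ℕ) = 3 from rfl] at h'
        have : ((A + A - A).card : ℝ) ≤ ((A + A).card : ℝ) ^ 3 / (n:ℝ) ^ 2 := by
          rw [div_pow] at h'
          calc ((A + A - A).card : ℝ) ≤ ((A + A).card : ℝ) ^ 3 / (n:ℝ) ^ 3 * (n:ℝ) := h'
            _ = ((A + A).card : ℝ) ^ 3 / (n:ℝ) ^ 2 := by
                field_simp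
        calc ((A + A - A).card : ℝ) * (n:ℝ) ^ 2
            ≤ (((A + A).card : ℝ) ^ 3 / (n:ℝ) ^ 2) * (n:ℝ) ^ 2 := by
              apply mul_le_mul_of_nonneg_right this (by positivity)
          _ = ((A + A).card : ℝ) ^ 3 := by field_simp
      -- embeddings
      have hAA : ((A + A).card : ℝ) ≤ ((Iset A).card : ℝ) := by
        have e1 : (a₀ - b₀) • (A + A) = (a₀ - b₀) • A + (a₀ - b₀) • A := smul_addset _ _ _
        have h : (A + A).card ≤ (Iset A).card := by
          calc (A + A).card = ((a₀ - b₀) • (A + A)).card :=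
              (card_smul' (hDne _ hd₀) _).symm
            _ = ((a₀ - b₀) • A + (a₀ - b₀) • A).card := by rw [e1]
            _ ≤ (Iset A).card := card_le_card
                (addset_subset (hDsub hd₀) (hDsub hd₀))
        exact_mod_cast h
      have hAx : ((A + ξ₀ • A).card : ℝ) ≤ ((Iset A).card : ℝ) := by
        exact_mod_cast hembed ξ₀ hξ₀R
      -- final arithmetic
      set I := ((Iset A).card : ℝ) with hI
      have hfin : (n:ℝ) ^ 5 ≤ I ^ 4 := by
        have hstep1 : (n:ℝ) ^ 2 * (n:ℝ) ≤ ((A + A - A).card : ℝ) * ((A + ξ₀ • A).card : ℝ) := by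
          have hc2 : ((n:ℝ)) ^ 2 ≤ ((A + A + ξ₀ • A).card : ℝ) := by exact_mod_cast hcard2
          have hr : ((A + A + ξ₀ • A).card : ℝ) * (n:ℝ) ≤
              ((A + A - A).card : ℝ) * ((A + ξ₀ • A).card : ℝ) := by exact_mod_cast hruzsa
          calc (n:ℝ) ^ 2 * (n:ℝ) ≤ ((A + A + ξ₀ • A).card : ℝ) * (n:ℝ) := by
                apply mul_le_mul_of_nonneg_right hc2 (by positivity)
            _ ≤ _ := hr
        have hxnn : (0:ℝ) ≤ ((A + ξ₀ • A).card : ℝ) := by positivity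
        have hchain : (n:ℝ) ^ 5 ≤ ((A + A).card : ℝ) ^ 3 * ((A + ξ₀ • A).card : ℝ) := by
          calc (n:ℝ) ^ 5 = ((n:ℝ) ^ 2 * (n:ℝ)) * (n:ℝ) ^ 2 := by ring
            _ ≤ (((A + A - A).card : ℝ) * ((A + ξ₀ • A).card : ℝ)) * (n:ℝ) ^ 2 := by
                apply mul_le_mul_of_nonneg_right hstep1 (by positivity)
            _ = (((A + A - A).card : ℝ) * (n:ℝ) ^ 2) * ((A + ξ₀ • A).card : ℝ) := by ring
            _ ≤ ((A + A).card : ℝ) ^ 3 * ((A + ξ₀ • A).card : ℝ) := by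
                apply mul_le_mul_of_nonneg_right hplu hxnn
        have hI0 : (0:ℝ) ≤ I := by positivity
        have hAA3 : ((A + A).card : ℝ) ^ 3 ≤ I ^ 3 :=
          pow_le_pow_left₀ (by positivity) hAA 3
        calc (n:ℝ) ^ 5 ≤ ((A + A).card : ℝ) ^ 3 * ((A + ξ₀ • A).card : ℝ) := hchain
          _ ≤ I ^ 3 * I := by
              apply mul_le_mul (pow_le_pow_left₀ (by positivity) hAA 3) hAx hxnn
                (by positivity)
          _ = I ^ 4 := by ring
      have hfinal : (n:ℝ) ^ ((5:ℝ)/4) ≤ I := by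
        have hI0 : (0:ℝ) ≤ I := by positivity
        have hn0 : (0:ℝ) ≤ (n:ℝ) := by positivity
        have h1' : ((n:ℝ) ^ 5) ^ ((1:ℝ)/4) ≤ (I ^ 4) ^ ((1:ℝ)/4) :=
          Real.rpow_le_rpow (by positivity) hfin (by norm_num)
        have e1 : ((n:ℝ) ^ 5) ^ ((1:ℝ)/4) = (n:ℝ) ^ ((5:ℝ)/4) := by
          rw [← Real.rpow_natCast (n:ℝ) 5, ← Real.rpow_mul hn0]
          norm_num
        have e2 : (I ^ 4) ^ ((1:ℝ)/4) = I := by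
          rw [← Real.rpow_natCast I 4, ← Real.rpow_mul hI0]
          norm_num
        rw [e1, e2] at h1'
        exact h1'
      have hrnn : (0:ℝ) ≤ (n:ℝ) ^ ((5:ℝ)/4) := by positivity
      linarith
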